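/- arXiv:1411.5739 — 8 statements merged into one kernel-verified Lean document; each statement's English description precedes it below -/
import Mathlib

section
/- (Offline disjoint set cover guarantee) Let U be a finite universe with |U| = n >= 2 and let S be a finite indexed family of subsets of U with F_min(S) = F. Set l = floor(F / ln(n * ln n)). If l >= 1, then T_opt(S) >= l - l / ln n; that is, there exist at least l * (1 - 1/ln n) pairwise disjoint set covers of U from S. -/
/-- Frequency of element `i` in the finite indexed family `S`. -/
noncomputable def freqFam {U ι : Type*} (S : ι → Finset U) (i : U) : ℕ :=
  Nat.card {j : ι // i ∈ S j}

/-- The minimum frequency of an element of the universe. -/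
noncomputable def FminFam {U ι : Type*} (S : ι → Finset U) : ℕ :=
  sInf (Set.range fun i : U => freqFam S i)

/-- The maximum number of pairwise disjoint set covers obtainable from the family `S`. -/
noncomputable def ToptFam {U ι : Type*} (S : ι → Finset U) : ℕ :=
  sSup {k | ∃ C : Fin k → Finset ι,
    (∀ a b, a ≠ b → Disjoint (C a) (C b)) ∧
    ∀ a, ∀ u : U, ∃ j ∈ C a, u ∈ S j}


/-!
Colour the members of `S` uniformly at random with `l` colours. A colour misses a fixed element
of frequency `d` with probability `(1 - 1/l)^d ≤ exp (-F/l) ≤ 1/(n ln n)`, so the expected number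
of colours whose class is not a cover is at most `l · n / (n ln n) = l / ln n`. Some colouring
therefore has at least `l - l / ln n` covering colour classes, and these are disjoint covers.
The expectation is carried out by counting colourings.
-/

open Finset

section Colorings

variable {U ι κ : Type*}

lemma ToptFam_bddAbove [Fintype ι] [Nonempty U] (S : ι → Finset U) :
    BddAbove {k | ∃ C : Fin k → Finset ι,
      (∀ a b, a ≠ b → Disjoint (C a) (C b)) ∧ ∀ a, ∀ u : U, ∃ j ∈ C a, u ∈ S j} := by
  refine ⟨Fintype.card ι, ?_⟩
  rintro k ⟨C, hdisj, hcov⟩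
  obtain ⟨u⟩ := ‹Nonempty U›
  choose f hf using fun a => (hcov a u).imp fun _ h => h.1
  have hinj : Function.Injective f := fun a b hab => by
    by_contra h
    exact disjoint_left.1 (hdisj a b h) (hf a) (hab ▸ hf b)
  simpa using Fintype.card_le_of_injective f hinj

lemma le_ToptFam [Fintype ι] [Nonempty U] (S : ι → Finset U) {k : ℕ} (C : Fin k → Finset ι)
    (hdisj : ∀ a b, a ≠ b → Disjoint (C a) (C b)) (hcov : ∀ a, ∀ u : U, ∃ j ∈ C a, u ∈ S j) :
    k ≤ ToptFam S :=
  le_csSup (ToptFam_bddAbove S) ⟨C, hdisj, hcov⟩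

lemma freqFam_eq_card [Fintype ι] [DecidableEq U] (S : ι → Finset U) (u : U) :
    freqFam S u = #{j | u ∈ S j} := by
  rw [freqFam, Nat.card_eq_fintype_card, Fintype.card_subtype]

lemma FminFam_le_freqFam (S : ι → Finset U) (u : U) : FminFam S ≤ freqFam S u :=
  Nat.sInf_le ⟨u, rfl⟩

def IsCoveringColor (S : ι → Finset U) (g : ι → κ) (c : κ) : Prop :=
  ∀ u, ∃ j, g j = c ∧ u ∈ S j

open Classical in
lemma card_isCoveringColor_le_ToptFam [Fintype ι] [Fintype κ] [Nonempty U]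
    (S : ι → Finset U) (g : ι → κ) :
    #{c | IsCoveringColor S g c} ≤ ToptFam S := by
  set e := (univ.filter (IsCoveringColor S g)).equivFin.symm
  refine le_ToptFam S (fun a => {j | g j = e a}) (fun a b hab => ?_) (fun a u => ?_)
  · refine disjoint_left.2 fun j hja hjb => hab (e.injective (Subtype.ext ?_))
    rw [← (mem_filter.1 hja).2, (mem_filter.1 hjb).2]
  · obtain ⟨j, hj, hu⟩ := (mem_filter.1 (e a).2).2 u
    exact ⟨j, mem_filter.2 ⟨mem_univ j, hj⟩, hu⟩

end Colorings

section Counting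

variable {ι κ : Type*} [Fintype ι] [DecidableEq ι] [Fintype κ] [DecidableEq κ]

lemma card_filter_forall_ne (p : ι → Prop) [DecidablePred p] (c : κ) :
    #{g : ι → κ | ∀ j, p j → g j ≠ c} =
      (Fintype.card κ - 1) ^ #{j | p j} * Fintype.card κ ^ #{j | ¬ p j} := by
  have h : ({g : ι → κ | ∀ j, p j → g j ≠ c} : Finset _) =
      Fintype.piFinset fun j => if p j then {c}ᶜ else univ := by
    ext g
    simp only [mem_filter, mem_univ, true_and, Fintype.mem_piFinset]
    refine forall_congr' fun j => ?_
    by_cases hj : p j <;> simp [hj]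
  rw [h, Fintype.card_piFinset]
  simp only [apply_ite card, card_compl, card_singleton, card_univ]
  rw [prod_ite, prod_const, prod_const]

lemma card_filter_forall_ne_eq_mul_pow [Nonempty κ] (p : ι → Prop) [DecidablePred p] (c : κ) :
    (#{g : ι → κ | ∀ j, p j → g j ≠ c} : ℝ) =
      (Fintype.card κ : ℝ) ^ Fintype.card ι * (1 - 1 / Fintype.card κ) ^ #{j | p j} := by
  have hq : (Fintype.card κ : ℝ) ≠ 0 := by positivity
  have hsplit : Fintype.card ι = #{j | p j} + #{j | ¬ p j} := by
    rw [card_filter_add_card_filter_not, card_univ]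
  rw [card_filter_forall_ne, hsplit, one_sub_div hq, div_pow, pow_add]
  push_cast [Nat.cast_sub Fintype.card_pos]
  field_simp

end Counting

section Averaging

variable {U ι κ : Type*} [Fintype U] [Fintype ι] [Fintype κ]

open Classical in
lemma sum_card_not_isCoveringColor_le [DecidableEq ι] [DecidableEq κ] (S : ι → Finset U) :
    ∑ g : ι → κ, #{c | ¬ IsCoveringColor S g c} ≤
      ∑ c : κ, ∑ u : U, #{g : ι → κ | ∀ j, u ∈ S j → g j ≠ c} := by
  have hpoint : ∀ g : ι → κ, #{c | ¬ IsCoveringColor S g c} ≤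
      ∑ c : κ, #{u : U | ∀ j, u ∈ S j → g j ≠ c} := by
    intro g
    rw [card_eq_sum_ones, sum_filter]
    refine sum_le_sum fun c _ => ?_
    split_ifs with hc
    · exact Nat.zero_le _
    · obtain ⟨u, hu⟩ : ∃ u, ∀ j, g j = c → u ∉ S j := by simpa [IsCoveringColor] using hc
      exact card_pos.2 ⟨u, mem_filter.2 ⟨mem_univ u, fun j hj hgj => hu j hgj hj⟩⟩
  calc ∑ g : ι → κ, #{c | ¬ IsCoveringColor S g c}
      ≤ ∑ g : ι → κ, ∑ c : κ, #{u : U | ∀ j, u ∈ S j → g j ≠ c} :=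
        sum_le_sum fun g _ => hpoint g
    _ = ∑ c : κ, ∑ u : U, #{g : ι → κ | ∀ j, u ∈ S j → g j ≠ c} := by
      simp only [card_filter]
      rw [sum_comm]
      exact sum_congr rfl fun c _ => sum_comm

open Classical in
theorem exists_coloring_card_not_isCoveringColor_le [Nonempty κ] (S : ι → Finset U) :
    ∃ g : ι → κ, (#{c | ¬ IsCoveringColor S g c} : ℝ) ≤
      Fintype.card κ * ∑ u, (1 - 1 / Fintype.card κ : ℝ) ^ freqFam S u := by
  set q := (Fintype.card κ : ℝ)
  have htotal : ∑ g : ι → κ, (#{c | ¬ IsCoveringColor S g c} : ℝ) ≤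
      ∑ _g : ι → κ, q * ∑ u, (1 - 1 / q) ^ freqFam S u := by
    calc ∑ g : ι → κ, (#{c | ¬ IsCoveringColor S g c} : ℝ)
        ≤ ((∑ c : κ, ∑ u : U, #{g : ι → κ | ∀ j, u ∈ S j → g j ≠ c} : ℕ) : ℝ) := by
          exact_mod_cast sum_card_not_isCoveringColor_le S
      _ = _ := by
        push_cast
        simp only [card_filter_forall_ne_eq_mul_pow, freqFam_eq_card, sum_const, card_univ,
          Fintype.card_fun, ← mul_sum, nsmul_eq_mul]
        push_cast
        ring
  obtain ⟨g, -, hg⟩ := exists_le_of_sum_le univ_nonempty htotal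
  exact ⟨g, hg⟩

theorem card_sub_mul_sum_le_ToptFam [Nonempty U] [Nonempty κ] (S : ι → Finset U) :
    (Fintype.card κ : ℝ) - Fintype.card κ * ∑ u, (1 - 1 / Fintype.card κ : ℝ) ^ freqFam S u ≤
      ToptFam S := by
  classical
  obtain ⟨g, hg⟩ := exists_coloring_card_not_isCoveringColor_le (κ := κ) S
  have hsplit : (#{c | IsCoveringColor S g c} + #{c | ¬ IsCoveringColor S g c} : ℝ) =
      Fintype.card κ := by
    exact_mod_cast card_filter_add_card_filter_not _
  have hcov : (#{c | IsCoveringColor S g c} : ℝ) ≤ ToptFam S := by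
    exact_mod_cast card_isCoveringColor_le_ToptFam S g
  linarith

end Averaging

lemma one_sub_one_div_pow_le_inv {l d : ℕ} {x : ℝ} (hl : 1 ≤ l) (hx : 0 < x)
    (h : l * Real.log x ≤ d) : (1 - 1 / l : ℝ) ^ d ≤ x⁻¹ := by
  have hl0 : (0 : ℝ) < l := by exact_mod_cast hl
  have hbase : 0 ≤ (1 - 1 / l : ℝ) := sub_nonneg.2 ((div_le_one hl0).2 (by exact_mod_cast hl))
  calc (1 - 1 / l : ℝ) ^ d
      ≤ Real.exp (-(1 / l)) ^ d :=
        pow_le_pow_left₀ hbase (by linarith [Real.add_one_le_exp (-(1 / l : ℝ))]) d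
    _ = Real.exp (-(d / l)) := by rw [← Real.exp_nat_mul]; ring_nf
    _ ≤ Real.exp (-Real.log x) := by
      rw [Real.exp_le_exp, neg_le_neg_iff, le_div_iff₀ hl0]
      linarith
    _ = x⁻¹ := by rw [Real.exp_neg, Real.exp_log hx]

lemma one_lt_mul_log {x : ℝ} (hx : 2 ≤ x) : 1 < x * Real.log x := by
  have hlog : Real.log 2 ≤ Real.log x := Real.log_le_log two_pos hx
  nlinarith [Real.log_two_gt_d9]

/-- (Offline disjoint set cover guarantee) Let `U = Fin n` with `n ≥ 2` and let `S`
be a finite indexed family of subsets of `U` with `F_min(S) = F`.  Set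
`l = ⌊F / ln (n * ln n)⌋`.  If `l ≥ 1` then `T_opt(S) ≥ l - l / ln n`. -/
theorem stmt4 {ι : Type*} [Fintype ι] (n : ℕ) (hn : 2 ≤ n)
    (S : ι → Finset (Fin n)) (F l : ℕ)
    (hF : FminFam S = F)
    (hl : l = ⌊(F : ℝ) / Real.log ((n : ℝ) * Real.log n)⌋₊)
    (hl1 : 1 ≤ l) :
    (l : ℝ) - (l : ℝ) / Real.log n ≤ (ToptFam S : ℝ) := by
  have : Nonempty (Fin n) := ⟨⟨0, by omega⟩⟩
  have : Nonempty (Fin l) := ⟨⟨0, hl1⟩⟩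
  have hX : 1 < (n : ℝ) * Real.log n := one_lt_mul_log (by exact_mod_cast hn)
  have hlogn : 0 < Real.log n := Real.log_pos (by exact_mod_cast hn)
  have hlF : (l : ℝ) * Real.log (n * Real.log n) ≤ F := by
    have := Nat.floor_le (div_nonneg F.cast_nonneg (Real.log_pos hX).le)
    rwa [← hl, le_div_iff₀ (Real.log_pos hX)] at this
  have hsum : ∑ u, (1 - 1 / l : ℝ) ^ freqFam S u ≤ (Real.log n)⁻¹ :=
    calc ∑ u, (1 - 1 / l : ℝ) ^ freqFam S u
        ≤ ∑ _u : Fin n, ((n : ℝ) * Real.log n)⁻¹ := sum_le_sum fun u _ =>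
          one_sub_one_div_pow_le_inv hl1 (by linarith)
            (hlF.trans (by exact_mod_cast hF ▸ FminFam_le_freqFam S u))
      _ = (Real.log n)⁻¹ := by
        rw [sum_const, card_univ, Fintype.card_fin, nsmul_eq_mul]
        field_simp
  have hT := card_sub_mul_sum_le_ToptFam (κ := Fin l) S
  rw [Fintype.card_fin] at hT
  calc (l : ℝ) - l / Real.log n
      ≤ l - l * ∑ u, (1 - 1 / l : ℝ) ^ freqFam S u := by
        rw [div_eq_mul_inv]; gcongr
    _ ≤ ToptFam S := hT
end

section
/- (Theorem: an O(ln n)-competitive online algorithm exists) There exists a constant C > 0 such that for every n >= 2 there is a function A : ℕ -> List (Finset (Fin n)) -> ℕ (a deterministic online algorithm that is given F_min in advance) with the property: for every nonempty finite sequence S of subsets of Fin n whose union is Fin n, T(A(F_min(S)), S) >= 1 and T_opt(S) <= C * (ln n) * T(A(F_min(S)), S). -/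
/-- Frequency of element `i` in the sequence of subsets `S`. -/
def freqL {U : Type*} [DecidableEq U] (S : List (Finset U)) (i : U) : ℕ :=
  S.countP fun s => decide (i ∈ s)

/-- The minimum frequency `F_min(S)` of an element of the universe. -/
noncomputable def FminL {U : Type*} [Fintype U] [DecidableEq U]
    (S : List (Finset U)) : ℕ :=
  sInf (Set.range fun i : U => freqL S i)

/-- The union of the subsets assigned to bin `b` by the online algorithm `A` on the
arrival sequence `S`: the `j`-th subset is irrevocably assigned to bin
`A [S_1, …, S_j]`. -/
def binUnion {U : Type*} [DecidableEq U] (A : List (Finset U) → ℕ)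
    (S : List (Finset U)) (b : ℕ) : Finset U :=
  (Finset.range S.length).sup fun j =>
    if A (S.take (j + 1)) = b then S.getD j ∅ else ∅

/-- `T(A, S)`: the number of bins whose assigned subsets have union the whole
universe. -/
def TonlineU {U : Type*} [Fintype U] [DecidableEq U] (A : List (Finset U) → ℕ)
    (S : List (Finset U)) : ℕ :=
  (((Finset.range S.length).image fun j => A (S.take (j + 1))).filter
    fun b => binUnion A S b = Finset.univ).card

/-- `T_opt(S)`: the maximum number of pairwise disjoint subfamilies of `S`
(disjoint as index sets) each of whose union is the whole universe. -/
noncomputable def ToptL {U : Type*} (S : List (Finset U)) : ℕ :=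
  sSup {k | ∃ C : Fin k → Finset (Fin S.length),
    (∀ a b, a ≠ b → Disjoint (C a) (C b)) ∧
    ∀ a, ∀ u : U, ∃ j ∈ C a, u ∈ S.get j}

/-!
Given `F = F_min(S)`, open `k = max 1 ⌊F / L⌋` bins, where `L = ⌈ln 2n⌉`, and track the
potential `Φ = ∑_b ∑_{i ∉ bin b} x ^ (F - seen i)` with `x = 1 - 1/k`, where `seen i` counts the
sets received so far that contain `i`. Each arriving set goes to the bin where it lowers `Φ` the
most. That bin gains at least the average `1/k` of the total gain while the weights of the new
set's elements grow by the factor `1/x`, so `Φ` never increases. Initially `Φ = k n x^F ≤ k/2`.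
At the end every element has been seen at least `F` times, so each bin missing an element still
contributes at least `1` to `Φ`: at least `k/2` bins cover the universe, while
`T_opt ≤ F_min ≤ 2kL = O(k ln n)`.
-/

open Finset

lemma List.card_filter_get_eq_countP {α : Type*} (l : List α) (p : α → Prop) [DecidablePred p] :
    #{j : Fin l.length | p (l.get j)} = l.countP (fun a => decide (p a)) := by
  rw [card_def, filter_val, ← Multiset.countP_map, Fin.univ_val_map, List.ofFn_get,
    Multiset.coe_countP]

lemma Finset.sum_erase_le_one_sub_inv_mul {ι : Type*} [DecidableEq ι] {s : Finset ι}
    {f : ι → ℝ} {b : ι} (hb : b ∈ s) (hmax : ∀ c ∈ s, f c ≤ f b) :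
    ∑ c ∈ s.erase b, f c ≤ (1 - 1 / #s) * ∑ c ∈ s, f c := by
  have hs : (0 : ℝ) < #s := by exact_mod_cast card_pos.2 ⟨b, hb⟩
  have hsum : ∑ c ∈ s, f c ≤ #s * f b := by
    simpa [nsmul_eq_mul] using sum_le_card_nsmul s f (f b) hmax
  rw [sum_erase_eq_sub hb, sub_mul, one_mul, one_div, inv_mul_eq_div]
  have : (∑ c ∈ s, f c) / #s ≤ f b := by rwa [div_le_iff₀ hs, mul_comm]
  linarith

section

variable {U : Type*} [DecidableEq U]

lemma freqL_append_singleton (l : List (Finset U)) (S : Finset U) (i : U) :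
    freqL (l ++ [S]) i = freqL l i + if i ∈ S then 1 else 0 := by
  by_cases h : i ∈ S <;> simp [freqL, List.countP_append, h]

lemma ToptL_le_freqL (S : List (Finset U)) (i : U) : ToptL S ≤ freqL S i := by
  refine csSup_le ⟨0, fun a => a.elim0, fun a => a.elim0, fun a => a.elim0⟩ ?_
  rintro k ⟨C, hdisj, hcov⟩
  choose g hgC hgi using fun a : Fin k => hcov a i
  have hinj : Function.Injective g := fun a b hab => by
    by_contra hne
    exact disjoint_left.1 (hdisj a b hne) (hgC a) (hab ▸ hgC b)
  calc k = #(univ : Finset (Fin k)) := by simp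
    _ ≤ #{j : Fin S.length | i ∈ S.get j} :=
        card_le_card_of_injOn g (fun a _ => by simpa using hgi a) hinj.injOn
    _ = freqL S i := List.card_filter_get_eq_countP S (i ∈ ·)

lemma binUnion_append_singleton (A : List (Finset U) → ℕ) (l : List (Finset U))
    (S : Finset U) (b : ℕ) :
    binUnion A (l ++ [S]) b = (if A (l ++ [S]) = b then S else ∅) ∪ binUnion A l b := by
  have hlen : (l ++ [S]).length = l.length + 1 := by simp
  rw [binUnion, hlen, range_add_one, sup_insert, ← hlen, List.take_length,
    List.getD_append_right _ _ _ _ le_rfl, Nat.sub_self, binUnion]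
  congr 1
  refine sup_congr rfl fun j hj => ?_
  have hj : j < l.length := mem_range.1 hj
  rw [List.take_append_of_le_length (by omega), List.getD_append _ _ _ _ hj]

variable [Fintype U]

lemma FminL_le_freqL (S : List (Finset U)) (i : U) : FminL S ≤ freqL S i :=
  Nat.sInf_le ⟨i, rfl⟩

lemma exists_freqL_eq_FminL [Nonempty U] (S : List (Finset U)) : ∃ i, freqL S i = FminL S :=
  Nat.sInf_mem (Set.range_nonempty _)

lemma ToptL_le_FminL [Nonempty U] (S : List (Finset U)) : ToptL S ≤ FminL S := by
  obtain ⟨i, hi⟩ := exists_freqL_eq_FminL S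
  exact hi ▸ ToptL_le_freqL S i

lemma FminL_pos [Nonempty U] {S : List (Finset U)} (hcov : ∀ u, ∃ s ∈ S, u ∈ s) :
    0 < FminL S := by
  obtain ⟨i, hi⟩ := exists_freqL_eq_FminL S
  obtain ⟨s, hs, his⟩ := hcov i
  exact hi ▸ List.countP_pos_iff.2 ⟨s, hs, decide_eq_true his⟩

lemma card_filter_binUnion_eq_univ_le_TonlineU [Nonempty U] (A : List (Finset U) → ℕ)
    (S : List (Finset U)) (s : Finset ℕ) :
    #{b ∈ s | binUnion A S b = univ} ≤ TonlineU A S := by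
  refine card_le_card fun b hb => mem_filter.2 ⟨?_, (mem_filter.1 hb).2⟩
  obtain ⟨j, hj, hmem⟩ := mem_sup.1 <| (mem_filter.1 hb).2 ▸ mem_univ (Classical.arbitrary U)
  refine mem_image.2 ⟨j, hj, ?_⟩
  by_contra hne
  simp [hne] at hmem

end

namespace GreedyCover

variable {U : Type*} [DecidableEq U] (k F : ℕ)

structure State (U : Type*) where
  seen : U → ℕ
  bin : ℕ → Finset U

-- Truncated subtraction makes the weight `1` once `s ≥ F`.
noncomputable def weight (s : ℕ) : ℝ := (1 - 1 / k : ℝ) ^ (F - s)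

noncomputable def gain (σ : State U) (S : Finset U) (b : ℕ) : ℝ :=
  ∑ i ∈ S \ σ.bin b, weight k F (σ.seen i + 1)

noncomputable def choice (σ : State U) (S : Finset U) : ℕ :=
  if h : (range k).Nonempty then (exists_max_image (range k) (gain k F σ S) h).choose else 0

noncomputable def step (σ : State U) (S : Finset U) : State U where
  seen i := σ.seen i + if i ∈ S then 1 else 0
  bin b := if b = choice k F σ S then σ.bin b ∪ S else σ.bin b

noncomputable def run (l : List (Finset U)) : State U :=
  l.foldl (step k F) ⟨fun _ => 0, fun _ => ∅⟩

noncomputable def alg (l : List (Finset U)) : ℕ :=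
  choice k F (run k F l.dropLast) (l.getLastD ∅)

variable {k F}

lemma choice_spec (hk : 0 < k) (σ : State U) (S : Finset U) :
    choice k F σ S ∈ range k ∧ ∀ c ∈ range k, gain k F σ S c ≤ gain k F σ S (choice k F σ S) := by
  have h : (range k).Nonempty := nonempty_range_iff.2 hk.ne'
  rw [choice, dif_pos h]
  exact (exists_max_image (range k) (gain k F σ S) h).choose_spec

lemma weight_nonneg (hk : 0 < k) (s : ℕ) : 0 ≤ weight k F s := by
  have : (1 / k : ℝ) ≤ 1 := div_le_one_of_le₀ (by exact_mod_cast hk) (Nat.cast_nonneg k)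
  exact pow_nonneg (by linarith) _

lemma weight_of_le {s : ℕ} (h : F ≤ s) : weight k F s = 1 := by
  rw [weight, Nat.sub_eq_zero_of_le h, pow_zero]

lemma mul_weight_succ_le (hk : 0 < k) (s : ℕ) :
    (1 - 1 / k) * weight k F (s + 1) ≤ weight k F s := by
  rcases lt_or_ge s F with h | h
  · rw [weight, weight, show F - s = F - (s + 1) + 1 by omega, pow_succ, mul_comm]
  · rw [weight_of_le h, weight_of_le (by omega), mul_one]
    exact sub_le_self _ (by positivity)

lemma run_append_singleton (l : List (Finset U)) (S : Finset U) :
    run k F (l ++ [S]) = step k F (run k F l) S :=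
  List.foldl_concat ..

lemma alg_append_singleton (l : List (Finset U)) (S : Finset U) :
    alg k F (l ++ [S]) = choice k F (run k F l) S := by
  rw [alg, List.dropLast_concat, List.getLastD_concat]

lemma seen_run (l : List (Finset U)) (i : U) : (run k F l).seen i = freqL l i := by
  induction l using List.reverseRecOn with
  | nil => rfl
  | append_singleton l S ih =>
    rw [run_append_singleton, freqL_append_singleton, ← ih]
    rfl

lemma bin_run (l : List (Finset U)) (b : ℕ) : (run k F l).bin b = binUnion (alg k F) l b := by
  induction l using List.reverseRecOn with
  | nil => simp [run, binUnion]
  | append_singleton l S ih =>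
    rw [run_append_singleton, binUnion_append_singleton, alg_append_singleton, ← ih]
    by_cases hb : b = choice k F (run k F l) S
    · simp [step, hb, union_comm]
    · simp [step, hb, Ne.symm hb]

section Potential

variable [Fintype U]

variable (k F) in
noncomputable def binPotential (σ : State U) (b : ℕ) : ℝ :=
  ∑ i ∈ (σ.bin b)ᶜ, weight k F (σ.seen i)

variable (k F) in
noncomputable def potential (σ : State U) : ℝ :=
  ∑ b ∈ range k, binPotential k F σ b

lemma binPotential_eq (σ : State U) (S : Finset U) (b : ℕ) :
    binPotential k F σ b = ∑ i ∈ (σ.bin b)ᶜ \ S, weight k F (σ.seen i)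
      + ∑ i ∈ S \ σ.bin b, weight k F (σ.seen i) := by
  rw [binPotential, ← sum_inter_add_sum_sdiff _ S, add_comm, sdiff_eq_inter_compl S, inter_comm]

lemma binPotential_step (σ : State U) (S : Finset U) (b : ℕ) :
    binPotential k F (step k F σ S) b = ∑ i ∈ (σ.bin b)ᶜ \ S, weight k F (σ.seen i)
      + if b = choice k F σ S then 0 else gain k F σ S b := by
  have hout : ∀ i ∈ (σ.bin b)ᶜ \ S, (step k F σ S).seen i = σ.seen i := fun i hi => by
    simp [step, (mem_sdiff.1 hi).2]
  by_cases hb : b = choice k F σ S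
  · rw [if_pos hb, add_zero, binPotential, show (step k F σ S).bin b = σ.bin b ∪ S from if_pos hb,
      compl_union, ← sdiff_eq_inter_compl]
    exact sum_congr rfl fun i hi => by rw [hout i hi]
  · rw [if_neg hb, binPotential, show (step k F σ S).bin b = σ.bin b from if_neg hb,
      ← sum_inter_add_sum_sdiff _ S, add_comm, inter_comm, ← sdiff_eq_inter_compl, gain]
    refine congrArg₂ _ (sum_congr rfl fun i hi => by rw [hout i hi]) (sum_congr rfl fun i hi => ?_)
    simp [step, (mem_sdiff.1 hi).1]

lemma potential_step_le (hk : 0 < k) (σ : State U) (S : Finset U) :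
    potential k F (step k F σ S) ≤ potential k F σ := by
  obtain ⟨hb, hmax⟩ := choice_spec (F := F) hk σ S
  set rest := ∑ c ∈ range k, ∑ i ∈ (σ.bin c)ᶜ \ S, weight k F (σ.seen i)
  calc potential k F (step k F σ S)
        = rest + ∑ c ∈ (range k).erase (choice k F σ S), gain k F σ S c := by
        simp only [potential, binPotential_step, sum_add_distrib, ← filter_ne', sum_filter,
          ite_not, rest]
    _ ≤ rest + (1 - 1 / k) * ∑ c ∈ range k, gain k F σ S c := by
        gcongr
        simpa using sum_erase_le_one_sub_inv_mul hb hmax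
    _ ≤ rest + ∑ c ∈ range k, ∑ i ∈ S \ σ.bin c, weight k F (σ.seen i) := by
        rw [mul_sum]
        gcongr with c
        rw [gain, mul_sum]
        gcongr with i
        exact mul_weight_succ_le hk _
    _ = potential k F σ := by simp only [potential, binPotential_eq _ S, sum_add_distrib, rest]

lemma potential_run_le (hk : 0 < k) (l : List (Finset U)) :
    potential k F (run k F l) ≤ k * Fintype.card U * (1 - 1 / k) ^ F := by
  induction l using List.reverseRecOn with
  | nil => simp [run, potential, binPotential, weight, mul_assoc]
  | append_singleton l S ih =>
    rw [run_append_singleton]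
    exact (potential_step_le hk _ S).trans ih

lemma card_not_full_le_potential (hk : 0 < k) {σ : State U} (hF : ∀ i, F ≤ σ.seen i) :
    (#{b ∈ range k | σ.bin b ≠ univ} : ℝ) ≤ potential k F σ := by
  rw [potential, ← sum_filter_add_sum_filter_not (range k) (σ.bin · ≠ univ)]
  refine le_add_of_le_of_nonneg ?_ (sum_nonneg fun b _ => sum_nonneg fun i _ => weight_nonneg hk _)
  rw [card_eq_sum_ones, Nat.cast_sum]
  refine sum_le_sum fun b hb => ?_
  obtain ⟨i, hi⟩ : (σ.bin b)ᶜ.Nonempty := by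
    rw [nonempty_iff_ne_empty, Ne, compl_eq_empty_iff]
    exact (mem_filter.1 hb).2
  calc ((1 : ℕ) : ℝ) = weight k F (σ.seen i) := by rw [weight_of_le (hF i), Nat.cast_one]
    _ ≤ binPotential k F σ b :=
        single_le_sum (fun j _ => weight_nonneg hk (σ.seen j)) hi

theorem le_two_mul_TonlineU_alg [Nonempty U] (hk : 0 < k) (S : List (Finset U))
    (hF : ∀ i, F ≤ freqL S i) (hsmall : 2 * Fintype.card U * (1 - 1 / k : ℝ) ^ F ≤ 1) :
    k ≤ 2 * TonlineU (alg k F) S := by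
  have hfull : (#{b ∈ range k | (run k F S).bin b = univ} : ℝ) ≤ TonlineU (alg k F) S :=
    Nat.cast_le.2 <| by
      simpa only [bin_run] using card_filter_binUnion_eq_univ_le_TonlineU (alg k F) S (range k)
  have hsplit : (#{b ∈ range k | (run k F S).bin b = univ} : ℝ)
      + #{b ∈ range k | (run k F S).bin b ≠ univ} = k := by
    exact_mod_cast (card_filter_add_card_filter_not _).trans (card_range k)
  have hnotfull : (#{b ∈ range k | (run k F S).bin b ≠ univ} : ℝ) ≤ k / 2 := by
    calc _ ≤ potential k F (run k F S) :=
          card_not_full_le_potential hk fun i => (seen_run S i).symm ▸ hF i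
      _ ≤ k * Fintype.card U * (1 - 1 / k) ^ F := potential_run_le hk S
      _ ≤ k / 2 := by nlinarith [(Nat.cast_nonneg k : (0 : ℝ) ≤ k)]
  exact_mod_cast (by linarith : (k : ℝ) ≤ 2 * TonlineU (alg k F) S)

end Potential

end GreedyCover

section Numerics

open Real

lemma one_sub_inv_pow_le_exp {k : ℕ} (hk : 0 < k) (F : ℕ) :
    (1 - 1 / k : ℝ) ^ F ≤ exp (-(F / k)) := by
  have : (1 / k : ℝ) ≤ 1 := div_le_one_of_le₀ (by exact_mod_cast hk) (Nat.cast_nonneg k)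
  calc (1 - 1 / k : ℝ) ^ F ≤ exp (-(1 / k)) ^ F :=
        pow_le_pow_left₀ (by linarith) (one_sub_le_exp_neg _) F
    _ = exp (-(F / k)) := by rw [← exp_nat_mul]; ring_nf

lemma two_mul_mul_pow_le_one {n F L : ℕ} (hn : 0 < n) (hF : 0 < F) (hL : log (2 * n) ≤ L) :
    2 * n * (1 - 1 / (max 1 (F / L) : ℕ) : ℝ) ^ F ≤ 1 := by
  rcases Nat.eq_zero_or_pos (F / L) with h | h
  · simp [h, zero_pow hF.ne']
  have hn' : (0 : ℝ) < 2 * n := by positivity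
  have hkL : (F / L : ℕ) * L ≤ F := Nat.div_mul_le_self F L
  have hk : (0 : ℝ) < (F / L : ℕ) := by exact_mod_cast h
  calc 2 * n * (1 - 1 / (max 1 (F / L) : ℕ) : ℝ) ^ F
      ≤ 2 * n * exp (-(F / (F / L : ℕ))) := by
        rw [max_eq_right h]
        gcongr
        exact one_sub_inv_pow_le_exp h F
    _ ≤ 2 * n * exp (-log (2 * n)) := by
        gcongr
        rw [le_div_iff₀ hk]
        calc log (2 * n) * (F / L : ℕ) ≤ L * (F / L : ℕ) := by gcongr
          _ ≤ F := by rw [mul_comm]; exact_mod_cast hkL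
    _ = 1 := by rw [exp_neg, exp_log hn', mul_inv_cancel₀ hn'.ne']

lemma le_two_mul_max_one_div_mul (F : ℕ) {L : ℕ} (hL : 0 < L) : F ≤ 2 * max 1 (F / L) * L := by
  have h := Nat.lt_div_mul_add (a := F) hL
  have : F / L + 1 ≤ 2 * max 1 (F / L) := by omega
  calc F ≤ (F / L + 1) * L := by rw [add_mul, one_mul]; exact h.le
    _ ≤ 2 * max 1 (F / L) * L := Nat.mul_le_mul_right L this

lemma ceil_log_two_mul_le {n : ℕ} (hn : 2 ≤ n) : (⌈log (2 * n)⌉₊ : ℝ) ≤ 4 * log n := by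
  have hn' : (2 : ℝ) ≤ n := by exact_mod_cast hn
  have hlog2 : log 2 ≤ log n := log_le_log (by norm_num) hn'
  have hpos : 0 < log (2 * n) := log_pos (by linarith)
  have hceil := Nat.ceil_lt_add_one hpos.le
  have hsplit : log (2 * n) = log 2 + log n := log_mul (by norm_num) (by linarith)
  linarith [log_two_gt_d9]

end Numerics

/-- (An `O(ln n)`-competitive online algorithm exists) There is a constant `C > 0`
such that for every `n ≥ 2` there is a deterministic online algorithm `A` (given
`F_min` in advance) with: for every nonempty arrival sequence `S` of subsets of
`Fin n` whose union is `Fin n`, `T(A(F_min S), S) ≥ 1` and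
`T_opt(S) ≤ C * ln n * T(A(F_min S), S)`. -/
theorem stmt6 : ∃ C : ℝ, 0 < C ∧ ∀ n : ℕ, 2 ≤ n →
    ∃ A : ℕ → List (Finset (Fin n)) → ℕ,
      ∀ S : List (Finset (Fin n)), S ≠ [] →
        (∀ u : Fin n, ∃ s ∈ S, u ∈ s) →
        1 ≤ TonlineU (A (FminL S)) S ∧
        (ToptL S : ℝ) ≤ C * Real.log n * (TonlineU (A (FminL S)) S : ℝ) := by
  refine ⟨16, by norm_num, fun n hn => ?_⟩
  have : Nonempty (Fin n) := ⟨⟨0, by omega⟩⟩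
  set L := ⌈Real.log (2 * n)⌉₊
  have hL : 0 < L := Nat.ceil_pos.2 (Real.log_pos (by norm_cast; omega))
  refine ⟨fun F => GreedyCover.alg (max 1 (F / L)) F, fun S _ hcov => ?_⟩
  set F := FminL S
  set T := TonlineU (GreedyCover.alg (max 1 (F / L)) F) S
  have hT : max 1 (F / L) ≤ 2 * T :=
    GreedyCover.le_two_mul_TonlineU_alg (le_max_left 1 _) S (FminL_le_freqL S)
      (by simpa using two_mul_mul_pow_le_one (by omega) (FminL_pos hcov) (Nat.le_ceil _))
  have hTopt : ToptL S ≤ 4 * T * L := calc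
    ToptL S ≤ F := ToptL_le_FminL S
    _ ≤ 2 * max 1 (F / L) * L := le_two_mul_max_one_div_mul F hL
    _ ≤ 4 * T * L := Nat.mul_le_mul_right L (by omega)
  refine ⟨by omega, ?_⟩
  calc (ToptL S : ℝ) ≤ 4 * T * L := by exact_mod_cast hTopt
    _ ≤ 4 * T * (4 * Real.log n) := by gcongr; exact ceil_log_two_mul_le hn
    _ = 16 * Real.log n * T := by ring
end

section
/- (Theorem: F_min lower bound without knowledge of F_min) For every n >= 3 and every m >= 2n - 2, and every deterministic online algorithm A : List (Finset (Fin n)) -> ℕ, there exist two finite sequences S1 and S2 of subsets of Fin n, both of length m, such that T_opt(S1) >= 1, T_opt(S2) >= n - 1, F_min(S2) = n - 1, and at least one of the following holds: T(A, S1) = 0, or T(A, S2) <= 1. In particular, any online algorithm that is given only the universe U and the number of subsets |S| in advance has competitive ratio at least F_min. -/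
/-!
The adversary presents the `k = n - 1` sets `{j, z}` (`j < k`), all containing a common point
`z`. If the algorithm puts them all into one bin, it continues with their complements: then `z`
lies in no later set, so at most that one bin can ever be completed, while `{j, z}` together with
its complement gives `k` disjoint covers and every point has frequency `k`. Otherwise every bin
misses one of the sets `{j, z}`, hence misses the point `j`, which occurs nowhere else; so if the
sequence simply stops (padding with empty sets), no bin is completed although the sets `{j, z}`
together cover the universe.
-/

section Online

variable {U : Type*}

lemma lt_length_of_mem_getElem_append {X T : List (Finset U)} {u : U} (hT : ∀ t ∈ T, u ∉ t)
    {j : ℕ} (hj : j < (X ++ T).length) (hu : u ∈ (X ++ T)[j]) : j < X.length := by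
  by_contra hjX
  rw [List.getElem_append_right (not_lt.1 hjX)] at hu
  exact hT _ (List.getElem_mem _) hu

variable [DecidableEq U] (A : List (Finset U) → ℕ)

lemma mem_binUnion {S : List (Finset U)} {b : ℕ} {u : U} :
    u ∈ binUnion A S b ↔
      ∃ (j : ℕ) (hj : j < S.length), A (S.take (j + 1)) = b ∧ u ∈ S[j] := by
  simp only [binUnion, Finset.mem_sup, Finset.mem_range]
  constructor
  · rintro ⟨j, hj, hu⟩
    split_ifs at hu with hb
    · exact ⟨j, hj, hb, by rwa [List.getD_eq_getElem _ _ hj] at hu⟩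
    · simp at hu
  · rintro ⟨j, hj, hb, hu⟩
    exact ⟨j, hj, by rwa [if_pos hb, List.getD_eq_getElem _ _ hj]⟩

variable [Fintype U]

lemma TonlineU_eq_zero_of_forall_exists {S : List (Finset U)}
    (h : ∀ b, ∃ u, ∀ (j : ℕ) (hj : j < S.length), u ∈ S[j] → A (S.take (j + 1)) ≠ b) :
    TonlineU A S = 0 := by
  rw [TonlineU, Finset.card_eq_zero, Finset.filter_eq_empty_iff]
  intro b _ hb
  obtain ⟨u, hu⟩ := h b
  obtain ⟨j, hj, hjb, huj⟩ := (mem_binUnion A).1 (hb ▸ Finset.mem_univ u)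
  exact hu j hj huj hjb

lemma TonlineU_le_one_of_forall_mem {S : List (Finset U)} (u : U) (b : ℕ)
    (h : ∀ (j : ℕ) (hj : j < S.length), u ∈ S[j] → A (S.take (j + 1)) = b) :
    TonlineU A S ≤ 1 := by
  refine (Finset.card_le_card (t := {b}) fun b' hb' => ?_).trans (Finset.card_singleton b).le
  obtain ⟨j, hj, hjb, huj⟩ :=
    (mem_binUnion A).1 ((Finset.mem_filter.1 hb').2 ▸ Finset.mem_univ u)
  exact Finset.mem_singleton.2 (hjb ▸ h j hj huj)

lemma TonlineU_append_eq_zero {X T : List (Finset U)}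
    (h : ∀ b, ∃ u, (∀ t ∈ T, u ∉ t) ∧
      ∀ (j : ℕ) (hj : j < X.length), u ∈ X[j] → A (X.take (j + 1)) ≠ b) :
    TonlineU A (X ++ T) = 0 := by
  refine TonlineU_eq_zero_of_forall_exists A fun b => ?_
  obtain ⟨u, hT, hX⟩ := h b
  refine ⟨u, fun j hj hu => ?_⟩
  have hjX := lt_length_of_mem_getElem_append hT hj hu
  rw [List.getElem_append_left hjX] at hu
  rw [List.take_append_of_le_length hjX]
  exact hX j hjX hu

lemma TonlineU_append_le_one {X T : List (Finset U)} {u : U} (hT : ∀ t ∈ T, u ∉ t) {b : ℕ}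
    (hX : ∀ j < X.length, A (X.take (j + 1)) = b) :
    TonlineU A (X ++ T) ≤ 1 :=
  TonlineU_le_one_of_forall_mem A u b fun j hj hu => by
    have hjX := lt_length_of_mem_getElem_append hT hj hu
    rw [List.take_append_of_le_length hjX]
    exact hX j hjX

end Online

section Offline

variable {U : Type*} [Nonempty U]

lemma bddAbove_disjoint_covers (S : List (Finset U)) :
    BddAbove {k | ∃ C : Fin k → Finset (Fin S.length),
      (∀ a b, a ≠ b → Disjoint (C a) (C b)) ∧ ∀ a, ∀ u : U, ∃ j ∈ C a, u ∈ S.get j} := by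
  refine ⟨S.length, ?_⟩
  rintro k ⟨C, hdisj, hcov⟩
  choose f hf _ using fun a => hcov a (Classical.arbitrary U)
  have hinj : Function.Injective f := fun a b hab => by
    by_contra hne
    exact Finset.disjoint_left.mp (hdisj a b hne) (hf a) (hab ▸ hf b)
  simpa using Fintype.card_le_of_injective f hinj

lemma le_ToptL {S : List (Finset U)} {k : ℕ} (C : Fin k → Finset (Fin S.length))
    (hdisj : ∀ a b, a ≠ b → Disjoint (C a) (C b))
    (hcov : ∀ a, ∀ u : U, ∃ j ∈ C a, u ∈ S.get j) :
    k ≤ ToptL S :=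
  le_csSup (bddAbove_disjoint_covers S) ⟨C, hdisj, hcov⟩

lemma one_le_ToptL {S : List (Finset U)} (h : ∀ u : U, ∃ s ∈ S, u ∈ s) : 1 ≤ ToptL S :=
  le_ToptL (fun _ => Finset.univ) (fun a b hab => absurd (Subsingleton.elim a b) hab) fun _ u => by
    obtain ⟨s, hs, hu⟩ := h u
    obtain ⟨j, rfl⟩ := List.get_of_mem hs
    exact ⟨j, Finset.mem_univ _, hu⟩

lemma length_le_ToptL_append_map_compl [Fintype U] [DecidableEq U] (X T : List (Finset U)) :
    X.length ≤ ToptL (X ++ (X.map (·ᶜ) ++ T)) := by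
  have hlen : (X ++ (X.map (·ᶜ) ++ T)).length = X.length + X.length + T.length := by
    simp [Nat.add_assoc]
  refine le_ToptL (fun a => {⟨a, by omega⟩, ⟨X.length + a, by omega⟩}) ?_ fun a u => ?_
  · intro a b hab
    rw [Ne, Fin.ext_iff] at hab
    simp only [Finset.disjoint_left, Finset.mem_insert, Fin.ext_iff, Finset.mem_singleton,
      not_or]
    omega
  · by_cases hu : u ∈ X[a]
    · refine ⟨_, Finset.mem_insert_self _ _, ?_⟩
      simpa [List.getElem_append_left a.isLt] using hu
    · refine ⟨_, Finset.mem_insert_of_mem (Finset.mem_singleton_self _), ?_⟩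
      simpa [List.getElem_append_right] using hu

end Offline

section Frequency

variable {U : Type*} [DecidableEq U]

lemma freqL_append (S T : List (Finset U)) (i : U) :
    freqL (S ++ T) i = freqL S i + freqL T i :=
  List.countP_append

lemma freqL_replicate_empty (r : ℕ) (i : U) : freqL (List.replicate r ∅) i = 0 := by
  simp [freqL]

lemma freqL_add_freqL_map_compl [Fintype U] (S : List (Finset U)) (i : U) :
    freqL S i + freqL (S.map (·ᶜ)) i = S.length := by
  rw [List.length_eq_countP_add_countP (fun s => decide (i ∈ s)), freqL, freqL,
    List.countP_map]
  simp [Function.comp_def]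

lemma FminL_eq_of_forall_freqL_eq [Fintype U] [Nonempty U] {S : List (Finset U)} {c : ℕ}
    (h : ∀ i, freqL S i = c) : FminL S = c := by
  rw [FminL, show (fun i => freqL S i) = fun _ => c from funext h, Set.range_const,
    csInf_singleton]

end Frequency

section Adversary

def pairWithLast (k : ℕ) (j : Fin k) : Finset (Fin (k + 1)) :=
  {j.castSucc, Fin.last k}

lemma castSucc_mem_pairWithLast_iff {k : ℕ} {i j : Fin k} :
    i.castSucc ∈ pairWithLast k j ↔ i = j := by
  simp [pairWithLast, Fin.castSucc_ne_last]

lemma exists_mem_pairWithLast {k : ℕ} (hk : 0 < k) (u : Fin (k + 1)) :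
    ∃ j, u ∈ pairWithLast k j := by
  obtain ⟨j, rfl⟩ | rfl := Fin.eq_castSucc_or_eq_last u
  · exact ⟨j, by simp [pairWithLast]⟩
  · exact ⟨⟨0, hk⟩, by simp [pairWithLast]⟩

lemma TonlineU_pairWithLast_eq_zero_or_le_one (k r r' : ℕ)
    (A : List (Finset (Fin (k + 1))) → ℕ) :
    TonlineU A (List.ofFn (pairWithLast k) ++ List.replicate r ∅) = 0 ∨
      TonlineU A (List.ofFn (pairWithLast k) ++
        ((List.ofFn (pairWithLast k)).map (·ᶜ) ++ List.replicate r' ∅)) ≤ 1 := by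
  set X := List.ofFn (pairWithLast k)
  by_cases hA : ∃ b, ∀ j < X.length, A (X.take (j + 1)) = b
  · obtain ⟨b, hb⟩ := hA
    refine Or.inr (TonlineU_append_le_one A (u := Fin.last k) ?_ hb)
    intro t ht
    rcases List.mem_append.1 ht with ht | ht
    · obtain ⟨s, hs, rfl⟩ := List.mem_map.1 ht
      obtain ⟨j, rfl⟩ := List.mem_ofFn.1 hs
      simp [pairWithLast]
    · rw [List.eq_of_mem_replicate ht]
      exact Finset.notMem_empty _
  · push Not at hA
    refine Or.inl (TonlineU_append_eq_zero A fun b => ?_)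
    obtain ⟨j₀, hj₀, hb⟩ := hA b
    refine ⟨(⟨j₀, by simpa [X] using hj₀⟩ : Fin k).castSucc, by simp, fun j hj hu => ?_⟩
    rw [List.getElem_ofFn, castSucc_mem_pairWithLast_iff, Fin.ext_iff] at hu
    obtain rfl : j₀ = j := hu
    exact hb

end Adversary

/-- (`F_min` lower bound without knowledge of `F_min`) For every `n ≥ 3`, every
`m ≥ 2n - 2` and every deterministic online algorithm `A`, there are two arrival
sequences `S1`, `S2` of subsets of `Fin n`, both of length `m`, with
`T_opt(S1) ≥ 1`, `T_opt(S2) ≥ n - 1`, `F_min(S2) = n - 1`, and either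
`T(A, S1) = 0` or `T(A, S2) ≤ 1`; hence any online algorithm given only the
universe and the number of subsets in advance has competitive ratio at least
`F_min`. -/
theorem stmt8 (n m : ℕ) (hn : 3 ≤ n) (hm : 2 * n - 2 ≤ m)
    (A : List (Finset (Fin n)) → ℕ) :
    ∃ S1 S2 : List (Finset (Fin n)),
      S1.length = m ∧ S2.length = m ∧
      1 ≤ ToptL S1 ∧ n - 1 ≤ ToptL S2 ∧ FminL S2 = n - 1 ∧
      (TonlineU A S1 = 0 ∨ TonlineU A S2 ≤ 1) := by
  obtain ⟨k, rfl⟩ : ∃ k, n = k + 1 := ⟨n - 1, by omega⟩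
  set X := List.ofFn (pairWithLast k)
  have hX : X.length = k := List.length_ofFn
  refine ⟨X ++ List.replicate (m - k) ∅, X ++ (X.map (·ᶜ) ++ List.replicate (m - 2 * k) ∅),
    by simp only [List.length_append, hX, List.length_replicate]; omega,
    by simp only [List.length_append, hX, List.length_map, List.length_replicate]; omega,
    ?_, ?_, ?_, TonlineU_pairWithLast_eq_zero_or_le_one k _ _ A⟩
  · refine one_le_ToptL fun u => ?_
    obtain ⟨j, hj⟩ := exists_mem_pairWithLast (by omega) u
    exact ⟨_, List.mem_append_left _ (List.mem_ofFn.2 ⟨j, rfl⟩), hj⟩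
  · simpa [hX] using length_le_ToptL_append_map_compl X (List.replicate (m - 2 * k) ∅)
  · refine FminL_eq_of_forall_freqL_eq fun i => ?_
    rw [freqL_append, freqL_append, freqL_replicate_empty, add_zero,
      freqL_add_freqL_map_compl, hX, Nat.add_sub_cancel]
end

section
/- (Cross-block pairing) Let X be a finite set with |X| = q >= 2, partitioned into blocks each of size at most ceil(q/2). Then there exist floor(q/2) pairwise disjoint unordered pairs of elements of X such that the two elements of each pair lie in distinct blocks of the partition. -/
/-!
Enumerate `X` as `x₀, …, x_{q-1}` so that every block is a contiguous run (sort by block along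
an arbitrary linear order on the blocks), and pair `xᵢ` with `x_{i+⌈q/2⌉}` for `i < ⌊q/2⌋`.
These pairs are disjoint because `⌊q/2⌋ ≤ ⌈q/2⌉`, and a block containing both `xᵢ` and
`x_{i+⌈q/2⌉}` would contain the `⌈q/2⌉ + 1` elements between them.
-/

open Finset Function

theorem Fintype.exists_equivFin_monotone_comp {α β : Type*} [Fintype α] [LinearOrder β]
    (f : α → β) : ∃ e : Fin (Fintype.card α) ≃ α, Monotone (f ∘ e) :=
  let e₀ := (Fintype.equivFin α).symm
  ⟨(Tuple.sort (f ∘ e₀)).trans e₀, Tuple.monotone_sort (f ∘ e₀)⟩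

theorem Monotone.add_one_sub_le_card_fiber {n : ℕ} {β : Type*} [PartialOrder β] [DecidableEq β]
    {g : Fin n → β} (hg : Monotone g) {i j : Fin n} (h : g i = g j) :
    (j : ℕ) + 1 - i ≤ #{k | g k = g i} :=
  calc (j : ℕ) + 1 - i = #(Icc i j) := (Fin.card_Icc i j).symm
    _ ≤ #{k | g k = g i} := card_le_card fun k hk => by
      rw [mem_Icc] at hk
      exact mem_filter.2 ⟨mem_univ k, le_antisymm (h ▸ hg hk.2) (hg hk.1)⟩

theorem Monotone.ne_of_val_eq_add_half {n : ℕ} {β : Type*} [PartialOrder β] [DecidableEq β]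
    {g : Fin n → β} (hg : Monotone g) (hfiber : ∀ i, #{k | g k = g i} ≤ (n + 1) / 2)
    {i j : Fin n} (hij : (j : ℕ) = i + (n + 1) / 2) : g i ≠ g j := fun h => by
  have := hg.add_one_sub_le_card_fiber h
  have := hfiber i
  omega

section Pairs

variable {ι α : Type*} [DecidableEq α] {a b : ι → α}

theorem injective_pair (ha : Injective a) (hab : ∀ i j, a i ≠ b j) :
    Injective fun i => ({a i, b i} : Finset α) := fun i j h => ha <| by
  have : a i ∈ ({a j, b j} : Finset α) := (congrArg (a i ∈ ·) h).mp (mem_insert_self _ _)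
  simpa [hab i j] using this

theorem pairwise_disjoint_pair (ha : Injective a) (hb : Injective b)
    (hab : ∀ i j, a i ≠ b j) : Pairwise (Disjoint on fun i => ({a i, b i} : Finset α)) :=
  fun i j hij => by
    simp [onFun, ha.ne hij.symm, hb.ne hij.symm, hab, (hab _ _).symm]

end Pairs

theorem exists_disjoint_pairs_of_card_fiber_le {α β : Type*} [Fintype α] [DecidableEq α]
    [DecidableEq β] (f : α → β) (hf : ∀ x, #{y | f y = f x} ≤ (Fintype.card α + 1) / 2) :
    ∃ pairs : Finset (Finset α), #pairs = Fintype.card α / 2 ∧ (∀ p ∈ pairs, #p = 2) ∧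
      (∀ p ∈ pairs, ∀ p' ∈ pairs, p ≠ p' → Disjoint p p') ∧
      ∀ p ∈ pairs, ∃ x ∈ p, ∃ y ∈ p, f x ≠ f y := by
  obtain ⟨_, -⟩ := exists_wellFoundedLT β
  set n := Fintype.card α
  obtain ⟨e, he⟩ : ∃ e : Fin n ≃ α, Monotone (f ∘ e) := Fintype.exists_equivFin_monotone_comp f
  let a : Fin (n / 2) → α := fun i => e ⟨i, by omega⟩
  let b : Fin (n / 2) → α := fun i => e ⟨i + (n + 1) / 2, by omega⟩
  have ha : Injective a := fun i j h => Fin.ext (by simpa [a] using e.injective h)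
  have hb : Injective b := fun i j h => Fin.ext (by simpa [b] using e.injective h)
  have hab : ∀ i j, a i ≠ b j := fun i j h => by
    have := congrArg Fin.val (e.injective h)
    simp only at this
    omega
  have hfab : ∀ i, f (a i) ≠ f (b i) := fun i =>
    he.ne_of_val_eq_add_half (fun k => (card_equiv e (by simp)).trans_le (hf (e k)))
      (i := ⟨i, _⟩) (j := ⟨i + (n + 1) / 2, _⟩) rfl
  refine ⟨univ.image fun i => {a i, b i}, ?_, ?_, ?_, ?_⟩
  · rw [card_image_of_injective _ (injective_pair ha hab), card_univ, Fintype.card_fin]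
  · simp only [mem_image, mem_univ, true_and, forall_exists_index, forall_apply_eq_imp_iff]
    exact fun i => card_pair (hab i i)
  · simp only [mem_image, mem_univ, true_and, forall_exists_index, forall_apply_eq_imp_iff]
    exact fun i j hij =>
      pairwise_disjoint_pair ha hb hab (ne_of_apply_ne (fun i => ({a i, b i} : Finset α)) hij)
  · simp only [mem_image, mem_univ, true_and, forall_exists_index, forall_apply_eq_imp_iff]
    exact fun i => ⟨a i, mem_insert_self _ _, b i, mem_insert_of_mem (mem_singleton_self _), hfab i⟩

theorem stmt10_general {X : Type*} [Fintype X] [DecidableEq X] (q : ℕ)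
    (hcard : Fintype.card X = q)
    (P : Finpartition (Finset.univ : Finset X))
    (hsize : ∀ B ∈ P.parts, B.card ≤ (q + 1) / 2) :
    ∃ pairs : Finset (Finset X),
      pairs.card = q / 2 ∧
      (∀ p ∈ pairs, p.card = 2) ∧
      (∀ p ∈ pairs, ∀ p' ∈ pairs, p ≠ p' → Disjoint p p') ∧
      (∀ p ∈ pairs, ∃ x ∈ p, ∃ y ∈ p, ∃ Bx ∈ P.parts, ∃ By ∈ P.parts,
        x ∈ Bx ∧ y ∈ By ∧ Bx ≠ By) := by
  subst hcard
  have hfiber (x : X) : #{y | P.part y = P.part x} = #(P.part x) := by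
    congr 1
    ext y
    simp [P.mem_part_iff_part_eq_part (mem_univ y) (mem_univ x)]
  obtain ⟨pairs, hcard, hpair, hdisj, hcross⟩ := exists_disjoint_pairs_of_card_fiber_le P.part
    fun x => (hfiber x).trans_le (hsize _ (P.part_mem.2 (mem_univ x)))
  refine ⟨pairs, hcard, hpair, hdisj, fun p hp => ?_⟩
  obtain ⟨x, hx, y, hy, hxy⟩ := hcross p hp
  exact ⟨x, hx, y, hy, P.part x, P.part_mem.2 (mem_univ x), P.part y, P.part_mem.2 (mem_univ y),
    P.mem_part (mem_univ x), P.mem_part (mem_univ y), hxy⟩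

/-- (Cross-block pairing) Let `X` be a finite set with `|X| = q ≥ 2`, partitioned
into blocks each of size at most `⌈q/2⌉`.  Then there exist `⌊q/2⌋` pairwise
disjoint unordered pairs (two-element subsets) of `X` such that the two elements
of each pair lie in distinct blocks of the partition. -/
theorem stmt10 {X : Type*} [Fintype X] [DecidableEq X] (q : ℕ) (hq : 2 ≤ q)
    (hcard : Fintype.card X = q)
    (P : Finpartition (Finset.univ : Finset X))
    (hsize : ∀ B ∈ P.parts, B.card ≤ (q + 1) / 2) :
    ∃ pairs : Finset (Finset X),
      pairs.card = q / 2 ∧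
      (∀ p ∈ pairs, p.card = 2) ∧
      (∀ p ∈ pairs, ∀ p' ∈ pairs, p ≠ p' → Disjoint p p') ∧
      (∀ p ∈ pairs, ∃ x ∈ p, ∃ y ∈ p, ∃ Bx ∈ P.parts, ∃ By ∈ P.parts,
        x ∈ Bx ∧ y ∈ By ∧ Bx ≠ By) :=
  stmt10_general q hcard P hsize
end

section
/- (Offline bound for the adversarial instance) Let q >= 2, let U = (Fin q -> Bool), and for g in Fin q let S_g = { u in U : u(g) = true }. Let P be a partition of Fin q into blocks each of size at most ceil(q/2), and let B_P be the set of bottleneck elements of the blocks of P (the element b_B with b_B(k) = true iff k is not in B, for each block B). Consider the finite multiset family S consisting of the q subsets S_g (g in Fin q) together with floor(q/2) copies of the singleton {u} for every u in U that is not in B_P. Then T_opt(S) >= floor(q/2); that is, S contains floor(q/2) pairwise disjoint set covers of U. -/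
/-- The set of bottleneck elements of the partition `P` of `Fin q`: for each block
`B` the element `b_B : Fin q → Bool` with `b_B k = true ↔ k ∉ B`. -/
def bottlenecks (q : ℕ) (P : Finpartition (Finset.univ : Finset (Fin q))) :
    Finset (Fin q → Bool) :=
  P.parts.image fun B => fun k : Fin q => decide (k ∉ B)

/-- The adversarial family: the `q` subsets `S_g = {u | u g = true}` for
`g : Fin q`, together with `⌊q/2⌋` copies of the singleton `{u}` for every
element `u` of the universe that is not a bottleneck element of `P`. -/
def advFamily (q : ℕ) (P : Finpartition (Finset.univ : Finset (Fin q))) :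
    (Fin q ⊕ ({u : Fin q → Bool // u ∉ bottlenecks q P} × Fin (q / 2))) →
      Finset (Fin q → Bool)
  | Sum.inl g => Finset.univ.filter fun u : Fin q → Bool => u g = true
  | Sum.inr p => {p.1.1}

/-! Enumerate `Fin q` block by block, so that every block is an interval of length at most
`⌈q/2⌉`. For `a < ⌊q/2⌋` the elements `g` and `h` at positions `a` and `a + ⌈q/2⌉` then lie
in different blocks, so every block `B` misses one of them and its bottleneck element lies in
`S_g` or `S_h`. Hence `S_g`, `S_h` and the `a`-th copies of the singletons form a cover, and these
`⌊q/2⌋` covers are disjoint. -/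

open Finset

lemma le_toptFam_of_coloring {U ι : Type*} [Nonempty U] [Finite ι] {S : ι → Finset U} {k : ℕ}
    (c : ι → Fin k) (hc : ∀ a u, ∃ j, c j = a ∧ u ∈ S j) : k ≤ ToptFam S := by
  classical
  have := Fintype.ofFinite ι
  refine le_csSup ⟨Fintype.card ι, ?_⟩ ⟨fun a => {j | c j = a}, ?_, ?_⟩
  · rintro n ⟨C, hdisj, hcov⟩
    choose f hf _ using fun a => hcov a (Classical.arbitrary U)
    have hinj : Function.Injective f := fun a b hab =>
      by_contra fun hne => disjoint_left.mp (hdisj a b hne) (hf a) (hab ▸ hf b)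
    simpa using Fintype.card_le_of_injective f hinj
  · intro a b hab
    exact disjoint_filter.mpr fun j _ hja hjb => hab (hja.symm.trans hjb)
  · intro a u
    obtain ⟨j, hj, hu⟩ := hc a u
    exact ⟨j, by simpa using hj, hu⟩

lemma Monotone.apply_ne_of_card_fiber_le {β : Type*} [LinearOrder β] {n d : ℕ}
    {f : Fin n → β} (hf : Monotone f) (hfib : ∀ i, #{t | f t = f i} ≤ d)
    {i j : Fin n} (hij : (i : ℕ) + d = j) : f i ≠ f j := by
  intro heq
  have hsub : Icc i j ⊆ ({t | f t = f i} : Finset (Fin n)) := fun t ht => by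
    rw [mem_Icc] at ht
    simpa using le_antisymm (heq ▸ hf ht.2) (hf ht.1)
  have := card_le_card hsub
  have := hfib i
  rw [Fin.card_Icc] at *
  omega

namespace Finpartition

variable {α : Type*} [Fintype α] [DecidableEq α] (P : Finpartition (univ : Finset α))

lemma exists_equiv_fin_part_ne {d : ℕ} (hd : ∀ B ∈ P.parts, #B ≤ d) :
    ∃ e : Fin (Fintype.card α) ≃ α,
      ∀ i j : Fin (Fintype.card α), (i : ℕ) + d = j → P.part (e i) ≠ P.part (e j) := by
  let key : α → Fin #P.parts := fun x =>
    P.parts.equivFin ⟨P.part x, P.part_mem.2 (mem_univ x)⟩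
  have key_eq_iff : ∀ x y, key x = key y ↔ P.part x = P.part y := fun x y => by
    simp [key, Subtype.ext_iff]
  let σ := (Fintype.equivFin α).symm
  let e := (Tuple.sort (key ∘ σ)).trans σ
  refine ⟨e, fun i j hij hpart => ?_⟩
  refine (Tuple.monotone_sort (key ∘ σ)).apply_ne_of_card_fiber_le (fun i => ?_) hij
    ((key_eq_iff _ _).mpr hpart)
  calc #{t | key (e t) = key (e i)}
      ≤ #(P.part (e i)) := by
        refine card_le_card_of_injOn e (fun t ht => ?_) e.injective.injOn
        have hkey : key (e t) = key (e i) := by simpa using ht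
        exact (key_eq_iff _ _).mp hkey ▸ P.mem_part (mem_univ _)
    _ ≤ d := hd _ (P.part_mem.2 (mem_univ _))

lemma exists_coloring_part_ne {m : ℕ} (hm : 0 < m) (h2m : 2 * m ≤ Fintype.card α)
    (hsize : ∀ B ∈ P.parts, #B + m ≤ Fintype.card α) :
    ∃ c : α → Fin m, ∀ a, ∃ x y, c x = a ∧ c y = a ∧ P.part x ≠ P.part y := by
  set n := Fintype.card α
  obtain ⟨e, he⟩ := P.exists_equiv_fin_part_ne (d := n - m) fun B hB => by
    have := hsize B hB; omega
  -- Positions `a` and `a + (n - m)` get colour `a`; for odd `n` the middle position gets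
  -- colour `0` through truncated subtraction.
  let c : α → Fin m := fun x =>
    if h : (e.symm x : ℕ) < m then ⟨_, h⟩
    else ⟨e.symm x - (n - m), by have := (e.symm x).isLt; omega⟩
  refine ⟨c, fun a => ⟨e ⟨a, by omega⟩, e ⟨a + (n - m), by omega⟩, ?_, ?_, he _ _ rfl⟩⟩
  · simp [c]
  · simp only [c, Equiv.symm_apply_apply]
    rw [dif_neg (by omega)]
    ext
    simp

end Finpartition

/-- (Offline bound for the adversarial instance) Let `q ≥ 2` and let `P` be a
partition of `Fin q` into blocks each of size at most `⌈q/2⌉`.  Then the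
adversarial family contains `⌊q/2⌋` pairwise disjoint set covers of the universe
`Fin q → Bool`, i.e. `T_opt ≥ ⌊q/2⌋`. -/
theorem stmt11 (q : ℕ) (hq : 2 ≤ q)
    (P : Finpartition (Finset.univ : Finset (Fin q)))
    (hsize : ∀ B ∈ P.parts, B.card ≤ (q + 1) / 2) :
    q / 2 ≤ ToptFam (advFamily q P) := by
  classical
  obtain ⟨c, hc⟩ := P.exists_coloring_part_ne (m := q / 2) (by omega)
    (by rw [Fintype.card_fin]; omega)
    fun B hB => by have := hsize B hB; rw [Fintype.card_fin]; omega
  refine le_toptFam_of_coloring (Sum.elim c Prod.snd) fun a u => ?_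
  by_cases hu : u ∈ bottlenecks q P
  · obtain ⟨B, hB, rfl⟩ := mem_image.mp hu
    obtain ⟨x, y, hx, hy, hxy⟩ := hc a
    have hout : x ∉ B ∨ y ∉ B := by
      by_contra! hin
      exact hxy ((P.part_eq_of_mem hB hin.1).trans (P.part_eq_of_mem hB hin.2).symm)
    rcases hout with hxB | hyB
    · exact ⟨Sum.inl x, hx, by simp [advFamily, hxB]⟩
    · exact ⟨Sum.inl y, hy, by simp [advFamily, hyB]⟩
  · exact ⟨Sum.inr (⟨u, hu⟩, a), rfl, by simp [advFamily]⟩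
end

section
/- (Optimization core of the cube-root lower bound) Let q >= 1 and let D : ℕ -> ℕ be a finitely supported function with sum over l >= 1 of l * D(l) equal to q. Then the sum over l >= 1 of min(l, D(l)) is at most (3q)^(2/3). -/
/-!
Cut the sum at a threshold `T`. A term with `l ≤ T` is at most `l`, so these terms contribute at
most `T (T + 1) / 2`; a term with `l > T` is at most `D l ≤ l * D l / T`, so these contribute at
most `q / T`. For `c = (3q)^(1/3) ≥ 3` the choice `T = ⌊c⌋` makes `T (T + 1) / 2 + c³ / (3T) ≤ c²`.
For `q ≤ 9` the termwise bound `min l (D l) ≤ l * D l` already gives a total of at most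
`q ≤ (3q)^(2/3)`.
-/

open Finset

lemma Nat.min_le_mul (a b : ℕ) : min a b ≤ a * b := by
  rcases Nat.eq_zero_or_pos b with rfl | hb
  · simp
  · exact min_le_mul_of_one_le_right hb

section

variable (D : ℕ → ℕ) (s : Finset ℕ)

lemma sum_min_le_sum_mul : ∑ l ∈ s, min l (D l) ≤ ∑ l ∈ s, l * D l :=
  sum_le_sum fun l _ => Nat.min_le_mul l (D l)

lemma two_mul_sum_filter_le_le (T : ℕ) : 2 * ∑ l ∈ s with l ≤ T, l ≤ T * (T + 1) :=
  calc 2 * ∑ l ∈ s with l ≤ T, l ≤ 2 * ∑ l ∈ range (T + 1), l := by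
        gcongr
        intro l
        simp only [mem_filter, mem_range]
        omega
    _ = T * (T + 1) := by rw [mul_comm, sum_range_id_mul_two, Nat.add_sub_cancel, mul_comm]

lemma two_mul_mul_sum_min_le (T : ℕ) :
    2 * T * ∑ l ∈ s, min l (D l) ≤ T * (T * (T + 1)) + 2 * ∑ l ∈ s, l * D l := by
  have hterm : ∀ l, T * min l (D l) ≤ T * (if l ≤ T then l else 0) + l * D l := by
    intro l
    split_ifs with hl
    · exact le_add_right (Nat.mul_le_mul_left T (min_le_left _ _))
    · rw [mul_zero, zero_add]
      exact Nat.mul_le_mul (by omega) (min_le_right _ _)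
  calc 2 * T * ∑ l ∈ s, min l (D l) = 2 * ∑ l ∈ s, T * min l (D l) := by
        rw [mul_assoc, mul_sum]
    _ ≤ 2 * ∑ l ∈ s, (T * (if l ≤ T then l else 0) + l * D l) := by
        gcongr with l
        exact hterm l
    _ = T * (2 * ∑ l ∈ s with l ≤ T, l) + 2 * ∑ l ∈ s, l * D l := by
        rw [sum_add_distrib, ← mul_sum, sum_filter]
        ring
    _ ≤ T * (T * (T + 1)) + 2 * ∑ l ∈ s, l * D l := by
        grw [two_mul_sum_filter_le_le s T]

end

lemma threshold_bound_le {T c : ℝ} (hT : 3 ≤ T) (hTc : T ≤ c) (hcT : c < T + 1) :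
    3 * T ^ 2 * (T + 1) + 2 * c ^ 3 ≤ 6 * T * c ^ 2 := by
  -- with `x = c - T ∈ [0, 1)` the difference is `(T - 3) T² + 2 x (3 T² - x²)`
  have hx : 0 ≤ (c - T) * (3 * T ^ 2 - (c - T) ^ 2) :=
    mul_nonneg (by linarith) (by nlinarith)
  have hT3 : 0 ≤ (T - 3) * T ^ 2 := mul_nonneg (by linarith) (sq_nonneg _)
  nlinarith

lemma le_sq_of_forall_threshold {S c : ℝ} (hc : 3 ≤ c)
    (h : ∀ T : ℕ, 6 * T * S ≤ 3 * T ^ 2 * (T + 1) + 2 * c ^ 3) : S ≤ c ^ 2 := by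
  have hT : (3 : ℝ) ≤ ⌊c⌋₊ := by exact_mod_cast Nat.le_floor (by exact_mod_cast hc)
  have hbound := threshold_bound_le hT (Nat.floor_le (by linarith)) (Nat.lt_floor_add_one c)
  have hpos : (0 : ℝ) < 6 * ⌊c⌋₊ := by linarith
  exact le_of_mul_le_mul_left ((h ⌊c⌋₊).trans hbound) hpos

lemma le_sq_of_le_of_pow_three_eq {S q c : ℝ} (hS : 0 ≤ S) (hSq : S ≤ q) (hq : q ≤ 9)
    (hc : c ^ 3 = 3 * q) : S ≤ c ^ 2 := by
  rw [← pow_le_pow_iff_left₀ hS (sq_nonneg c) three_ne_zero, ← pow_mul, mul_comm, pow_mul, hc]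
  calc S ^ 3 ≤ q ^ 3 := by gcongr
    _ = q * q ^ 2 := by ring
    _ ≤ 9 * q ^ 2 := by gcongr
    _ = (3 * q) ^ 2 := by ring

theorem stmt12_general (q : ℕ) (D : ℕ → ℕ)
    (hfin : (Function.support D).Finite)
    (hsum : ∑ᶠ l : ℕ, l * D l = q) :
    ((∑ᶠ l : ℕ, min l (D l) : ℕ) : ℝ) ≤ (3 * (q : ℝ)) ^ ((2 : ℝ) / 3) := by
  set s := hfin.toFinset
  have hD : Function.support D ⊆ s := hfin.coe_toFinset.ge
  have hmin : ∑ᶠ l, min l (D l) = ∑ l ∈ s, min l (D l) :=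
    finsum_eq_finsetSum_of_support_subset _ fun l hl => hD (by simp_all)
  have hmul : ∑ l ∈ s, l * D l = q := by
    rw [← hsum, finsum_eq_finsetSum_of_support_subset _
      ((Function.support_mul_subset_right _ _).trans hD)]
  set c : ℝ := (3 * (q : ℝ)) ^ ((1 : ℝ) / 3)
  have hc0 : 0 ≤ c := by positivity
  have hc3 : c ^ 3 = 3 * q := by
    rw [← Real.rpow_natCast, ← Real.rpow_mul (by positivity)]
    norm_num
  have hc2 : (3 * (q : ℝ)) ^ ((2 : ℝ) / 3) = c ^ 2 := by
    rw [← Real.rpow_natCast, ← Real.rpow_mul (by positivity)]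
    norm_num
  rw [hmin, hc2]
  set S := ∑ l ∈ s, min l (D l)
  rcases le_total q 9 with hq | hq
  · have hSq : S ≤ q := hmul ▸ sum_min_le_sum_mul D s
    exact le_sq_of_le_of_pow_three_eq (Nat.cast_nonneg _) (by exact_mod_cast hSq)
      (by exact_mod_cast hq) hc3
  · refine le_sq_of_forall_threshold ?_ fun T => ?_
    · rw [← pow_le_pow_iff_left₀ (by norm_num) hc0 three_ne_zero, hc3]
      have : (9 : ℝ) ≤ q := by exact_mod_cast hq
      linarith
    · have h := two_mul_mul_sum_min_le D s T
      rw [hmul] at h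
      have hR : (2 * T * S : ℝ) ≤ T * (T * (T + 1)) + 2 * q := by exact_mod_cast h
      rw [hc3]
      linarith

/-- (Optimization core of the cube-root lower bound) Let `q ≥ 1` and let
`D : ℕ → ℕ` be finitely supported with `∑_{l ≥ 1} l * D l = q` (the term at
`l = 0` vanishes, so the sum may be taken over all of `ℕ`).  Then
`∑_{l ≥ 1} min l (D l) ≤ (3q)^(2/3)`. -/
theorem stmt12 (q : ℕ) (hq : 1 ≤ q) (D : ℕ → ℕ)
    (hfin : (Function.support D).Finite)
    (hsum : ∑ᶠ l : ℕ, l * D l = q) :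
    ((∑ᶠ l : ℕ, min l (D l) : ℕ) : ℝ) ≤ (3 * (q : ℝ)) ^ ((2 : ℝ) / 3) :=
  stmt12_general q D hfin hsum
end

section
/- (Optimization core of the square-root lower bound) Let q >= 1, L >= 1, and let A, D : {1, ..., L} -> ℕ satisfy: A(l) <= D(l) for every l; the partial sums satisfy A(1) + A(2) + ... + A(l) <= l for every l in {1, ..., L} (equivalently, A(l) <= l - (A(1)+...+A(l-1)) for every l); and the sum over l of l * D(l) equals q. Then, writing T = A(1) + ... + A(L), one has T * (T + 1) <= 2q; in particular T <= sqrt(2q). -/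
/-!
Write `T l = A 1 + ⋯ + A l`. Passing from `l - 1` to `l` raises `T (T + 1)` by
`A l * (T (l - 1) + T l + 1) ≤ A l * ((l - 1) + l + 1) = 2 l A l`, using the partial-sum bounds
at `l - 1` and `l`. Summing gives `T (T + 1) ≤ 2 ∑ l A l ≤ 2 ∑ l D l = 2q`, and
`T² ≤ T (T + 1)` gives the square-root bound.
-/

open Finset

theorem sum_Icc_mul_succ_le_two_mul_sum_mul (A : ℕ → ℕ) (L : ℕ)
    (hpartial : ∀ l ≤ L, ∑ x ∈ Icc 1 l, A x ≤ l) :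
    (∑ l ∈ Icc 1 L, A l) * (∑ l ∈ Icc 1 L, A l + 1) ≤ 2 * ∑ l ∈ Icc 1 L, l * A l := by
  induction L with
  | zero => simp
  | succ L ih =>
    have hprev := hpartial L L.le_succ
    have hlast := hpartial (L + 1) le_rfl
    rw [sum_Icc_succ_top (by omega)] at hlast ⊢
    rw [sum_Icc_succ_top (by omega)]
    nlinarith [ih fun l hl => hpartial l (hl.trans L.le_succ)]

theorem Nat.cast_le_sqrt_of_mul_succ_le {n m : ℕ} (h : n * (n + 1) ≤ m) : (n : ℝ) ≤ √m := by
  refine Real.le_sqrt_of_sq_le ?_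
  exact_mod_cast (Nat.pow_two n ▸ Nat.mul_le_mul_left n n.le_succ).trans h

theorem stmt13_general (q L : ℕ) (A D : ℕ → ℕ)
    (hAD : ∀ l, 1 ≤ l → l ≤ L → A l ≤ D l)
    (hpartial : ∀ l, 1 ≤ l → l ≤ L → ∑ x ∈ Finset.Icc 1 l, A x ≤ l)
    (hsum : ∑ l ∈ Finset.Icc 1 L, l * D l = q) :
    (∑ l ∈ Finset.Icc 1 L, A l) * ((∑ l ∈ Finset.Icc 1 L, A l) + 1) ≤ 2 * q ∧
    ((∑ l ∈ Finset.Icc 1 L, A l : ℕ) : ℝ) ≤ Real.sqrt (2 * (q : ℝ)) := by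
  have hweighted : ∑ l ∈ Icc 1 L, l * A l ≤ q := hsum ▸ sum_le_sum fun l hl => by
    rw [mem_Icc] at hl
    exact Nat.mul_le_mul_left l (hAD l hl.1 hl.2)
  have hquad := (sum_Icc_mul_succ_le_two_mul_sum_mul A L fun l hl => by
    rcases l with _ | l
    · simp
    · exact hpartial _ l.succ_pos hl).trans (Nat.mul_le_mul_left 2 hweighted)
  exact ⟨hquad, by exact_mod_cast Nat.cast_le_sqrt_of_mul_succ_le hquad⟩

/-- (Optimization core of the square-root lower bound) Let `q ≥ 1`, `L ≥ 1` and
`A, D : {1, …, L} → ℕ` with `A l ≤ D l` for all `l`, partial sums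
`A 1 + ⋯ + A l ≤ l` for every `l ∈ {1, …, L}`, and `∑ l, l * D l = q`.  Then,
with `T = A 1 + ⋯ + A L`, one has `T * (T + 1) ≤ 2q`; in particular
`T ≤ √(2q)`. -/
theorem stmt13 (q L : ℕ) (hq : 1 ≤ q) (hL : 1 ≤ L) (A D : ℕ → ℕ)
    (hAD : ∀ l, 1 ≤ l → l ≤ L → A l ≤ D l)
    (hpartial : ∀ l, 1 ≤ l → l ≤ L → ∑ x ∈ Finset.Icc 1 l, A x ≤ l)
    (hsum : ∑ l ∈ Finset.Icc 1 L, l * D l = q) :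
    (∑ l ∈ Finset.Icc 1 L, A l) * ((∑ l ∈ Finset.Icc 1 L, A l) + 1) ≤ 2 * q ∧
    ((∑ l ∈ Finset.Icc 1 L, A l : ℕ) : ℝ) ≤ Real.sqrt (2 * (q : ℝ)) :=
  stmt13_general q L A D hAD hpartial hsum
end

section
/- (Tight instances) There exist infinitely many natural numbers n for which there is a finite indexed family S of subsets of Fin n with union equal to Fin n such that T_opt(S) <= F_min(S) / ln n. Consequently, on such instances any algorithm producing F_min/ln n disjoint set covers is optimal (competitive ratio 1). -/
/-! Let element `u` of `Fin n` choose an `f`-subset `F u` of a ground set of `m = 32 f` indices,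
and let set `j` consist of the elements `u` with `j ∈ F u`; then every element has frequency `f`.
A subfamily covers iff it meets every `F u`, so if every `16 f`-subset of the indices contains
some `F u`, each cover has more than `16 f` members and no two covers are disjoint: `T_opt ≤ 1`.
By a union bound over the at most `2 ^ m` candidate `16 f`-subsets, and `(1 - x) ^ n ≤ exp (-n x)`,
a choice of `F` with this property exists as soon as `n > m · C(m, f) / C(16 f, f)`, and since
`C(m, f) / C(16 f, f) ≤ (32 / 15) ^ f` such an `n` can be taken `≤ e ^ f`, i.e. `ln n ≤ f ≤ F_min`.
-/

open Finset

theorem le_FminFam {U ι : Type*} [Nonempty U] {S : ι → Finset U} {k : ℕ}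
    (h : ∀ u, k ≤ freqFam S u) : k ≤ FminFam S :=
  le_csInf (Set.range_nonempty _) (Set.forall_mem_range.2 h)

theorem ToptFam_le_of_lt_mul_card {U ι : Type*} [Fintype ι] (S : ι → Finset U) (k : ℕ)
    (h : ∀ C : Finset ι, (∀ u, ∃ j ∈ C, u ∈ S j) → Fintype.card ι < (k + 1) * #C) :
    ToptFam S ≤ k := by
  classical
  refine csSup_le' fun t ⟨C, hdisj, hcov⟩ => ?_
  by_contra! hkt
  have hsum : ∑ a, #(C a) ≤ Fintype.card ι := by
    rw [← card_biUnion fun a _ b _ hab => hdisj a b hab]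
    exact card_le_univ _
  have : t * Fintype.card ι < (k + 1) * ∑ a, #(C a) := by
    have : Nonempty (Fin t) := ⟨⟨0, by omega⟩⟩
    calc t * Fintype.card ι = ∑ _a : Fin t, Fintype.card ι := by simp
      _ < ∑ a, (k + 1) * #(C a) := sum_lt_sum_of_nonempty univ_nonempty fun a _ => h _ (hcov a)
      _ = (k + 1) * ∑ a, #(C a) := (mul_sum ..).symm
  nlinarith

section DualFamily

variable {U ι : Type*} [Fintype U] [DecidableEq ι]

def dualFam (F : U → Finset ι) (j : ι) : Finset U := {u | j ∈ F u}

theorem mem_dualFam {F : U → Finset ι} {j : ι} {u : U} : u ∈ dualFam F j ↔ j ∈ F u := by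
  simp [dualFam]

theorem freqFam_dualFam (F : U → Finset ι) (u : U) : freqFam (dualFam F) u = #(F u) := by
  simp only [freqFam, mem_dualFam, Nat.card_eq_fintype_card, Fintype.card_coe]

theorem card_compl_lt_of_covers_dualFam [Fintype ι] {F : U → Finset ι} {d : ℕ}
    (hF : ∀ D : Finset ι, #D = d → ∃ u, F u ⊆ D) {C : Finset ι}
    (hC : ∀ u, ∃ j ∈ C, u ∈ dualFam F j) : #Cᶜ < d := by
  by_contra! hd
  obtain ⟨D, hDC, hD⟩ := exists_subset_card_eq hd
  obtain ⟨u, hu⟩ := hF D hD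
  obtain ⟨j, hjC, hj⟩ := hC u
  exact mem_compl.1 (hDC (hu (mem_dualFam.1 hj))) hjC

theorem ToptFam_dualFam_le_one [Fintype ι] {F : U → Finset ι} {d : ℕ}
    (hF : ∀ D : Finset ι, #D = d → ∃ u, F u ⊆ D) (hd : 2 * d ≤ Fintype.card ι + 1) :
    ToptFam (dualFam F) ≤ 1 :=
  ToptFam_le_of_lt_mul_card _ 1 fun C hC => by
    have := card_compl_lt_of_covers_dualFam hF hC
    rw [card_compl] at this
    have := card_le_univ C
    omega

end DualFamily

theorem exists_forall_card_eq_forall_exists_subset_of_choose_mul_lt {U ι : Type*} [Fintype U]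
    [Fintype ι] {f d : ℕ}
    (h : (Fintype.card ι).choose d * ((Fintype.card ι).choose f - d.choose f) ^ Fintype.card U
      < (Fintype.card ι).choose f ^ Fintype.card U) :
    ∃ F : U → Finset ι, (∀ u, #(F u) = f) ∧ ∀ D : Finset ι, #D = d → ∃ u, F u ⊆ D := by
  classical
  set Ω : Finset (Finset ι) := univ.powersetCard f
  set avoiding : Finset ι → Finset (U → Finset ι) := fun D =>
    Fintype.piFinset fun _ => {s ∈ Ω | ¬ s ⊆ D}
  have card_avoiding : ∀ D : Finset ι, #D = d →
      #(avoiding D) = ((Fintype.card ι).choose f - d.choose f) ^ Fintype.card U := by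
    intro D hD
    have hsub : {s ∈ Ω | s ⊆ D} = D.powersetCard f := by
      ext s
      simp only [Ω, mem_filter, mem_powersetCard, subset_univ, true_and]
      tauto
    have := card_filter_add_card_filter_not (s := Ω) (· ⊆ D)
    rw [hsub, card_powersetCard, hD, card_powersetCard, card_univ] at this
    simp only [avoiding, Fintype.card_piFinset, prod_const, card_univ]
    congr 1
    omega
  have hnot : ¬ Fintype.piFinset (fun _ : U => Ω) ⊆ (univ.powersetCard d).biUnion avoiding := by
    intro hsub
    have := (card_le_card hsub).trans card_biUnion_le
    rw [sum_congr rfl fun D hD => card_avoiding D (mem_powersetCard.1 hD).2, sum_const,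
      card_powersetCard, card_univ, smul_eq_mul, Fintype.card_piFinset, prod_const, card_univ,
      card_powersetCard, card_univ] at this
    omega
  obtain ⟨F, hFΩ, hFD⟩ := not_subset.1 hnot
  refine ⟨F, fun u => (mem_powersetCard.1 (Fintype.mem_piFinset.1 hFΩ u)).2, fun D hD => ?_⟩
  by_contra! hno
  refine hFD (mem_biUnion.2 ⟨D, mem_powersetCard.2 ⟨subset_univ D, hD⟩, ?_⟩)
  exact Fintype.mem_piFinset.2 fun u => mem_filter.2 ⟨Fintype.mem_piFinset.1 hFΩ u, hno u⟩

theorem two_pow_mul_sub_pow_lt_pow {K Q m n : ℕ} (hQK : Q ≤ K) (h : m * K < n * Q) :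
    2 ^ m * (K - Q) ^ n < K ^ n := by
  have hK : (0 : ℝ) < K := by
    rcases Nat.eq_zero_or_pos K with rfl | hK
    · simp [Nat.le_zero.1 hQK] at h
    · exact_mod_cast hK
  have h_exp : (m : ℝ) < n * Q / K := by
    rw [lt_div_iff₀ hK]
    exact_mod_cast h
  have h_sub : (K - Q : ℝ) ≤ K * Real.exp (-(Q / K)) := by
    have := Real.one_sub_le_exp_neg (Q / K)
    calc (K - Q : ℝ) = K * (1 - Q / K) := by field_simp
      _ ≤ K * Real.exp (-(Q / K)) := by gcongr
  have h_two : (2 : ℝ) ^ m * Real.exp (-m) ≤ 1 := by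
    rw [Real.exp_neg, ← div_eq_mul_inv, div_le_one (Real.exp_pos _), ← Real.exp_one_pow]
    gcongr
    linarith [Real.add_one_le_exp 1]
  rw [← Nat.cast_lt (α := ℝ)]
  push_cast [Nat.cast_sub hQK]
  calc (2 : ℝ) ^ m * (K - Q) ^ n ≤ 2 ^ m * (K ^ n * Real.exp (-(n * Q / K))) := by
        gcongr
        calc ((K : ℝ) - Q) ^ n ≤ (K * Real.exp (-(Q / K))) ^ n :=
              pow_le_pow_left₀ (sub_nonneg.2 (by exact_mod_cast hQK)) h_sub n
          _ = K ^ n * Real.exp (-(n * Q / K)) := by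
              rw [mul_pow, ← Real.exp_nat_mul]; ring_nf
    _ < 2 ^ m * (K ^ n * Real.exp (-m)) := by gcongr
    _ = K ^ n * (2 ^ m * Real.exp (-m)) := by ring
    _ ≤ K ^ n := mul_le_of_le_one_right (by positivity) h_two

theorem exists_forall_card_eq_forall_exists_subset_of_lt {m d f n : ℕ} (hfd : f ≤ d)
    (hdm : d ≤ m) (hn : m * m.choose f / d.choose f < n) :
    ∃ F : Fin n → Finset (Fin m), (∀ u, #(F u) = f) ∧ ∀ D : Finset (Fin m), #D = d →
      ∃ u, F u ⊆ D := by
  have hQ : 0 < d.choose f := Nat.choose_pos hfd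
  have h_count : m * m.choose f < n * d.choose f := calc
    _ < (m * m.choose f / d.choose f + 1) * d.choose f :=
      (Nat.lt_div_mul_add hQ).trans_eq (add_one_mul _ _).symm
    _ ≤ n * d.choose f := Nat.mul_le_mul_right _ hn
  apply exists_forall_card_eq_forall_exists_subset_of_choose_mul_lt
  simp only [Fintype.card_fin]
  exact (Nat.mul_le_mul_right _ (Nat.choose_le_two_pow _ _)).trans_lt
    (two_pow_mul_sub_pow_lt_pow (Nat.choose_le_choose f hdm) h_count)

theorem choose_mul_pow_le_choose_mul_pow (m d f : ℕ) :
    m.choose f * (d + 1 - f) ^ f ≤ d.choose f * m ^ f := by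
  refine Nat.le_of_mul_le_mul_left ?_ f.factorial_pos
  calc f.factorial * (m.choose f * (d + 1 - f) ^ f) = m.descFactorial f * (d + 1 - f) ^ f := by
        rw [Nat.descFactorial_eq_factorial_mul_choose, mul_assoc]
    _ ≤ m ^ f * d.descFactorial f :=
        Nat.mul_le_mul (m.descFactorial_le_pow f) (d.pow_sub_le_descFactorial f)
    _ = f.factorial * (d.choose f * m ^ f) := by
        rw [Nat.descFactorial_eq_factorial_mul_choose]; ring

theorem cast_choose_div_choose_le {m d f : ℕ} (hfd : f ≤ d) :
    (m.choose f / d.choose f : ℝ) ≤ (m / (d + 1 - f)) ^ f := by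
  have hQ : (0 : ℝ) < d.choose f := by exact_mod_cast Nat.choose_pos hfd
  have hd : (0 : ℝ) < d + 1 - f := by
    have : (f : ℝ) ≤ d := by exact_mod_cast hfd
    linarith
  have key : (m.choose f : ℝ) * (d + 1 - f) ^ f ≤ d.choose f * m ^ f := by
    have := choose_mul_pow_le_choose_mul_pow m d f
    rw [← Nat.cast_le (α := ℝ)] at this
    push_cast [Nat.cast_sub (by omega : f ≤ d + 1)] at this
    exact this
  rw [div_le_iff₀ hQ, div_pow, div_mul_eq_mul_div, le_div_iff₀ (by positivity)]
  linarith

theorem thirty_three_mul_le_pow {f : ℕ} (hf : 40 ≤ f) : 33 * (f : ℝ) ≤ (81 / 64) ^ f := by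
  induction f, hf using Nat.le_induction with
  | base => norm_num
  | succ f hf ih =>
    have : (40 : ℝ) ≤ f := by exact_mod_cast hf
    rw [pow_succ]
    push_cast
    nlinarith

-- `81 / 64` is chosen so that `(32 / 15) * (81 / 64) = 27 / 10 < e`.
theorem cast_mul_choose_div_choose_add_one_le_exp {f : ℕ} (hf : 40 ≤ f) :
    ((32 * f * (32 * f).choose f / (16 * f).choose f + 1 : ℕ) : ℝ) ≤ Real.exp f := by
  have hf1 : (1 : ℝ) ≤ f := by exact_mod_cast (by omega : 1 ≤ f)
  have hpow : (1 : ℝ) ≤ (32 / 15) ^ f := one_le_pow₀ (by norm_num)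
  have hratio : (32 * f / (16 * f + 1 - f) : ℝ) ≤ 32 / 15 := by
    rw [div_le_div_iff₀ (by linarith) (by norm_num)]
    linarith
  have hchoose := cast_choose_div_choose_le (m := 32 * f) (d := 16 * f) (f := f) (by omega)
  push_cast at hchoose
  calc _ ≤ (32 * f * (32 * f).choose f / (16 * f).choose f : ℝ) + 1 := by
        push_cast; gcongr; exact (Nat.cast_div_le (α := ℝ)).trans_eq (by push_cast; rfl)
    _ ≤ 32 * f * (32 / 15) ^ f + 1 := by
        rw [mul_div_assoc]; gcongr; refine hchoose.trans (pow_le_pow_left₀ ?_ hratio f)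
        exact div_nonneg (by positivity) (by linarith)
    _ ≤ 33 * f * (32 / 15) ^ f := by nlinarith
    _ ≤ (81 / 64) ^ f * (32 / 15) ^ f := by gcongr; exact thirty_three_mul_le_pow hf
    _ = (27 / 10) ^ f := by rw [← mul_pow]; norm_num
    _ ≤ Real.exp 1 ^ f := by gcongr; linarith [Real.exp_one_gt_d9]
    _ = Real.exp f := Real.exp_one_pow f

/-- (Tight instances) There are infinitely many `n` for which there is a finite
indexed family `S` of subsets of `Fin n`, whose union is `Fin n`, with
`T_opt(S) ≤ F_min(S) / ln n`.  On such instances any algorithm producing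
`F_min / ln n` disjoint set covers is optimal (competitive ratio `1`). -/
theorem stmt16 : ∀ N : ℕ, ∃ n : ℕ, N ≤ n ∧
    ∃ (ι : Type) (_ : Fintype ι) (S : ι → Finset (Fin n)),
      (∀ u : Fin n, ∃ j : ι, u ∈ S j) ∧
      (ToptFam S : ℝ) ≤ (FminFam S : ℝ) / Real.log n := by
  intro N
  set f := max 40 N
  set n := max N (32 * f * (32 * f).choose f / (16 * f).choose f + 1)
  have h_le_div : 32 * f ≤ 32 * f * (32 * f).choose f / (16 * f).choose f :=
    (Nat.le_div_iff_mul_le (Nat.choose_pos (by omega))).2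
      (Nat.mul_le_mul_left _ (Nat.choose_le_choose f (by omega)))
  obtain ⟨F, hF_card, hF_sub⟩ :=
    exists_forall_card_eq_forall_exists_subset_of_lt (n := n) (m := 32 * f) (d := 16 * f)
      (f := f) (by omega) (by omega) (by omega)
  refine ⟨n, le_max_left _ _, Fin (32 * f), inferInstance, dualFam F, fun u => ?_, ?_⟩
  · obtain ⟨j, hj⟩ := card_pos.1 ((hF_card u).trans_gt (by omega))
    exact ⟨j, mem_dualFam.2 hj⟩
  have : Nonempty (Fin n) := ⟨⟨0, by omega⟩⟩
  have hT : ToptFam (dualFam F) ≤ 1 :=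
    ToptFam_dualFam_le_one hF_sub (by rw [Fintype.card_fin]; omega)
  have hF : f ≤ FminFam (dualFam F) := le_FminFam fun u => (freqFam_dualFam F u ▸ hF_card u).ge
  have hn : (1 : ℝ) < n := by exact_mod_cast (by omega : 1 < n)
  have hlog : Real.log n ≤ f := by
    rw [Real.log_le_iff_le_exp (by linarith), Nat.cast_max]
    refine max_le ?_ (cast_mul_choose_div_choose_add_one_le_exp (le_max_left _ _))
    exact (Nat.cast_le.2 (le_max_right 40 N)).trans (by linarith [Real.add_one_le_exp (f : ℝ)])
  calc (ToptFam (dualFam F) : ℝ) ≤ 1 := by exact_mod_cast hT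
    _ ≤ f / Real.log n := (one_le_div (Real.log_pos hn)).2 hlog
    _ ≤ FminFam (dualFam F) / Real.log n := by gcongr
end
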